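/- Let P and P_ε be Markov kernels on X with π stationary for P, P acting on L²(π) through T_P and L²(π)-geometrically ergodic with rate 1−α, P_ε acting on L²(π) through T_ε, ‖T_P − T_ε‖ ≤ ε, and 0 < ε < α. Suppose P_ε has a stationary probability measure π_ε with π_ε ≪ π, π ≪ π_ε and dπ_ε/dπ ∈ L²(π). Then for every probability measure μ ≪ π with dμ/dπ ∈ L²(π) and every n ∈ ℕ: ‖μP_εⁿ − π‖₂ ≤ (1−(α−ε))ⁿ ‖μ − π_ε‖₂ + ε/√(α² − ε²); and for every probability measure ν with bounded density dν/dπ_ε there is a finite constant C_ν such that ‖νP_εⁿ − π‖₁ ≤ C_ν (1−(α−ε))ⁿ + ε/√(α² − ε²). -/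

import Mathlib

open MeasureTheory ProbabilityTheory Filter ENNReal

variable {X : Type*} [MeasurableSpace X]

/-- The real-valued Radon–Nikodym density of `μ` with respect to `π`. -/
noncomputable def rnd (π μ : Measure X) (x : X) : ℝ := (μ.rnDeriv π x).toReal

/-- `n`-fold action of the kernel `P` on the measure `μ`, i.e. `μPⁿ`. -/
noncomputable def mIter (P : Kernel X X) (n : ℕ) (μ : Measure X) : Measure X :=
  (fun ν => ν.bind (fun x => P x))^[n] μ

/-- `n`-fold composition of the kernel `P`, i.e. `Pⁿ`. -/
noncomputable def kpow (P : Kernel X X) : ℕ → Kernel X X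
  | 0 => Kernel.id
  | n + 1 => (kpow P n).comp P

/-- `‖μ − ν‖₂`, the `L²(π)` distance between the `π`-densities of `μ` and `ν`. -/
noncomputable def d2 (π μ ν : Measure X) : ℝ :=
  (eLpNorm (fun x => rnd π μ x - rnd π ν x) 2 π).toReal

/-- `‖μ − ν‖₁`, the `L¹(π)` distance between the `π`-densities of `μ` and `ν`. -/
noncomputable def d1 (π μ ν : Measure X) : ℝ := ∫ x, |rnd π μ x - rnd π ν x| ∂π

/-- `P` acts on `L²(π)` through the bounded linear operator `T`:
for every probability measure `μ ≪ π` with `dμ/dπ ∈ L²(π)`,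
`T(dμ/dπ)` is a version of `d(μP)/dπ`. -/
def ActsOn (π : Measure X) (P : Kernel X X) (T : Lp ℝ 2 π →L[ℝ] Lp ℝ 2 π) : Prop :=
  ∀ μ : Measure X, IsProbabilityMeasure μ → μ ≪ π →
    ∀ h : MemLp (rnd π μ) 2 π,
      ⇑(T (h.toLp (rnd π μ))) =ᵐ[π] rnd π (μ.bind (fun x => P x))

/-- `L²(π)`-geometric ergodicity with rate `1 − α`:
`T` contracts mean-zero functions by the factor `1 − α`. -/
def IsGeomErg (π : Measure X) (T : Lp ℝ 2 π →L[ℝ] Lp ℝ 2 π) (α : ℝ) : Prop :=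
  ∀ f : Lp ℝ 2 π, ∫ x, f x ∂π = 0 → ‖T f‖ ≤ (1 - α) * ‖f‖

/-- Reversibility of `P` with respect to `π`. -/
def Reversible (π : Measure X) (P : Kernel X X) : Prop :=
  ∀ A B : Set X, MeasurableSet A → MeasurableSet B →
    ∫⁻ x in A, P x B ∂π = ∫⁻ x in B, P x A ∂π

/-- `∫ h dPᵏ(x,·)`, the `k`-step forward operator applied to `h`. -/
noncomputable def kInt (P : Kernel X X) (k : ℕ) (h : X → ℝ) (x : X) : ℝ :=
  ∫ y, h y ∂(kpow P k x)

/-- `μPᵏh = ∫∫ h(y) Pᵏ(x,dy) μ(dx)`. -/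
noncomputable def mkInt (P : Kernel X X) (μ : Measure X) (k : ℕ) (h : X → ℝ) : ℝ :=
  ∫ x, kInt P k h x ∂μ

/-- Path covariance `Cov_μ(f(X_t), g(X_{t+s}))` of the chain with kernel `P` started at `μ`. -/
noncomputable def covPath (P : Kernel X X) (μ : Measure X) (t s : ℕ) (f g : X → ℝ) : ℝ :=
  ∫ x, (∫ y, (∫ z, (f y - mkInt P μ t f) * (g z - mkInt P μ (t + s) g)
    ∂(kpow P s y)) ∂(kpow P t x)) ∂μ

/-- Path covariance `Cov_μ(f(X_m), g(X_n))` of the chain with kernel `P` started at `μ`. -/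
noncomputable def covPath2 (P : Kernel X X) (μ : Measure X) (m n : ℕ) (f g : X → ℝ) : ℝ :=
  ∫ x, (∫ y, (∫ z, (f y - mkInt P μ (min m n) f) * (g z - mkInt P μ (max m n) g)
    ∂(kpow P (max m n - min m n) y)) ∂(kpow P (min m n) x)) ∂μ


/-! Write `G = dπₑ/dπ` and `1 = dπ/dπ` in `L²(π)`; stationarity makes them fixed points,
`T 1 = 1` and `Tₑ G = G`. Since `‖T - Tₑ‖ ≤ ε`, `Tₑ` contracts mean-zero functions by
`1 - (α - ε)`, and the density of `μPₑⁿ` minus `G` has mean zero, so it shrinks geometrically.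
The bias `G - 1` has mean zero and satisfies `G - 1 = T (G - 1) + (Tₑ - T) G`, whence
`α ‖G - 1‖ ≤ ε ‖G‖`; by Pythagoras `‖G‖² = 1 + ‖G - 1‖²`, which solves to
`‖G - 1‖ ≤ ε / √(α² - ε²)`. A density bounded with respect to `πₑ` lies in `L²(π)`, and the
`L¹` distance is dominated by the `L²` distance. -/

section Densities

variable {π μ ν ρ : Measure X}

lemma rnd_nonneg (x : X) : 0 ≤ rnd π μ x := ENNReal.toReal_nonneg

lemma rnd_self_ae_eq_one [SigmaFinite π] : rnd π π =ᵐ[π] fun _ => 1 :=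
  (Measure.rnDeriv_self π).mono fun x hx => by simp [rnd, hx]

lemma memLp_rnd_self [IsFiniteMeasure π] : MemLp (rnd π π) 2 π :=
  (memLp_const 1).ae_eq rnd_self_ae_eq_one.symm

lemma integral_toLp_rnd [SigmaFinite π] [IsProbabilityMeasure μ] (hμ : μ ≪ π)
    (hm : MemLp (rnd π μ) 2 π) : ∫ x, hm.toLp (rnd π μ) x ∂π = 1 := by
  rw [integral_congr_ae hm.coeFn_toLp]
  simpa [rnd] using Measure.integral_toReal_rnDeriv hμ

lemma d2_eq_norm_toLp_sub (hμ : MemLp (rnd π μ) 2 π) (hν : MemLp (rnd π ν) 2 π) :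
    d2 π μ ν = ‖hμ.toLp (rnd π μ) - hν.toLp (rnd π ν)‖ := by
  rw [← MemLp.toLp_sub, Lp.norm_toLp]
  rfl

lemma d1_le_d2 [IsProbabilityMeasure π] (hμ : MemLp (rnd π μ) 2 π) (hν : MemLp (rnd π ν) 2 π) :
    d1 π μ ν ≤ d2 π μ ν := by
  have hsub := hμ.sub hν
  have hd1 : d1 π μ ν = (eLpNorm (fun x => rnd π μ x - rnd π ν x) 1 π).toReal := by
    simp_rw [d1, eLpNorm_one_eq_lintegral_enorm, ← Real.norm_eq_abs]
    exact integral_norm_eq_lintegral_enorm hsub.aestronglyMeasurable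
  rw [hd1, d2]
  exact ENNReal.toReal_mono hsub.eLpNorm_ne_top
    (eLpNorm_le_eLpNorm_of_exponent_le one_le_two hsub.aestronglyMeasurable)

lemma memLp_rnd_of_rnd_le [SigmaFinite π] [IsFiniteMeasure ν] [SigmaFinite ρ] (hν : ν ≪ ρ)
    (hπ : π ≪ ρ) (hρ : MemLp (rnd π ρ) 2 π) {M : ℝ} (hM : ∀ᵐ x ∂ρ, rnd ρ ν x ≤ M) :
    MemLp (rnd π ν) 2 π := by
  refine MemLp.of_le (hρ.const_mul M)
    (Measure.measurable_rnDeriv ν π).ennreal_toReal.aestronglyMeasurable ?_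
  filter_upwards [Measure.rnDeriv_mul_rnDeriv (κ := π) hν, hπ.ae_le hM] with x hchain hx
  have hfactor : rnd π ν x = rnd ρ ν x * rnd π ρ x := by
    rw [rnd, ← hchain, Pi.mul_apply, ENNReal.toReal_mul, rnd, rnd]
  rw [Real.norm_of_nonneg (rnd_nonneg x), hfactor]
  exact (mul_le_mul_of_nonneg_right hx (rnd_nonneg x)).trans (le_abs_self _)

end Densities

/-- The constant `1`, taken as the density `dπ/dπ` so that stationarity of `π` reads
`T (oneLp π) = oneLp π`. -/
noncomputable abbrev oneLp (π : Measure X) [IsFiniteMeasure π] : Lp ℝ 2 π :=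
  memLp_rnd_self.toLp (rnd π π)

lemma le_div_sqrt_of_mul_le {α ε x y : ℝ} (hε : 0 ≤ ε) (hεα : ε < α) (hx : 0 ≤ x)
    (hy : y ^ 2 = 1 + x ^ 2) (h : α * x ≤ ε * y) : x ≤ ε / √(α ^ 2 - ε ^ 2) := by
  have hgap : 0 < α ^ 2 - ε ^ 2 := by nlinarith
  have hsq : (x * √(α ^ 2 - ε ^ 2)) ^ 2 ≤ ε ^ 2 := by
    rw [mul_pow, Real.sq_sqrt hgap.le]
    nlinarith [mul_self_le_mul_self (mul_nonneg (hε.trans hεα.le) hx) h]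
  rw [le_div_iff₀ (Real.sqrt_pos.mpr hgap)]
  exact (pow_le_pow_iff_left₀ (by positivity) hε two_ne_zero).mp hsq

section L2

variable {π : Measure X}

lemma Lp.integral_sub_eq_zero_of_integral_eq [IsFiniteMeasure π] {F H : Lp ℝ 2 π}
    (h : ∫ x, F x ∂π = ∫ x, H x ∂π) : ∫ x, (F - H) x ∂π = 0 := by
  rw [integral_congr_ae (Lp.coeFn_sub F H), Pi.sub_def,
    integral_sub ((Lp.memLp F).integrable one_le_two) ((Lp.memLp H).integrable one_le_two),
    h, sub_self]

lemma inner_oneLp [IsFiniteMeasure π] (F : Lp ℝ 2 π) :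
    inner ℝ (oneLp π) F = ∫ x, F x ∂π := by
  rw [L2.inner_def]
  refine integral_congr_ae ?_
  filter_upwards [memLp_rnd_self.coeFn_toLp.trans rnd_self_ae_eq_one] with x hx
  simp [hx]

lemma integral_oneLp [IsProbabilityMeasure π] : ∫ x, oneLp π x ∂π = 1 :=
  integral_toLp_rnd Measure.AbsolutelyContinuous.rfl memLp_rnd_self

lemma norm_oneLp [IsProbabilityMeasure π] : ‖oneLp π‖ = 1 := by
  rw [Lp.norm_toLp, eLpNorm_congr_ae rnd_self_ae_eq_one,
    eLpNorm_const _ two_ne_zero (IsProbabilityMeasure.ne_zero π)]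
  simp

lemma norm_sq_eq_one_add_norm_sub_oneLp_sq [IsProbabilityMeasure π] {G : Lp ℝ 2 π}
    (hG : ∫ x, G x ∂π = 1) : ‖G‖ ^ 2 = 1 + ‖G - oneLp π‖ ^ 2 := by
  have horth : inner ℝ (oneLp π) (G - oneLp π) = 0 := by
    rw [inner_oneLp, Lp.integral_sub_eq_zero_of_integral_eq (hG.trans integral_oneLp.symm)]
  calc ‖G‖ ^ 2 = ‖oneLp π + (G - oneLp π)‖ ^ 2 := by rw [add_sub_cancel]
    _ = 1 + ‖G - oneLp π‖ ^ 2 := by rw [norm_add_sq_real, horth, norm_oneLp]; ring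

variable {T Te : Lp ℝ 2 π →L[ℝ] Lp ℝ 2 π} {α ε : ℝ}

lemma IsGeomErg.of_norm_sub_le (hge : IsGeomErg π T α) (hdiff : ‖T - Te‖ ≤ ε) :
    IsGeomErg π Te (α - ε) := by
  intro F hF
  calc ‖Te F‖ = ‖T F - (T - Te) F‖ := by simp
    _ ≤ ‖T F‖ + ‖(T - Te) F‖ := norm_sub_le _ _
    _ ≤ (1 - α) * ‖F‖ + ε * ‖F‖ :=
        add_le_add (hge F hF) ((T - Te).le_of_opNorm_le hdiff F)
    _ = (1 - (α - ε)) * ‖F‖ := by ring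

lemma mul_norm_sub_le_of_isGeomErg (hge : IsGeomErg π T α) (hdiff : ‖T - Te‖ ≤ ε)
    {I G : Lp ℝ 2 π} (hI : T I = I) (hG : Te G = G) (hmean : ∫ x, (G - I) x ∂π = 0) :
    α * ‖G - I‖ ≤ ε * ‖G‖ := by
  have hdecomp : G - I = T (G - I) + (Te - T) G := by
    simp only [map_sub, sub_apply, hI, hG]
    abel
  have hbound : ‖G - I‖ ≤ (1 - α) * ‖G - I‖ + ε * ‖G‖ :=
    calc ‖G - I‖ = ‖T (G - I) + (Te - T) G‖ := by rw [← hdecomp]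
      _ ≤ ‖T (G - I)‖ + ‖(Te - T) G‖ := norm_add_le _ _
      _ ≤ (1 - α) * ‖G - I‖ + ε * ‖G‖ :=
          add_le_add (hge _ hmean) ((Te - T).le_of_opNorm_le (by rwa [norm_sub_rev]) G)
  linarith

lemma norm_sub_oneLp_le_of_isGeomErg [IsProbabilityMeasure π] (hge : IsGeomErg π T α)
    (hdiff : ‖T - Te‖ ≤ ε) (hε : 0 ≤ ε) (hεα : ε < α) (hI : T (oneLp π) = oneLp π)
    {G : Lp ℝ 2 π} (hG : Te G = G) (hGint : ∫ x, G x ∂π = 1) :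
    ‖G - oneLp π‖ ≤ ε / √(α ^ 2 - ε ^ 2) := by
  have hmean : ∫ x, (G - oneLp π) x ∂π = 0 :=
    Lp.integral_sub_eq_zero_of_integral_eq (hGint.trans integral_oneLp.symm)
  exact le_div_sqrt_of_mul_le hε hεα (norm_nonneg _) (norm_sq_eq_one_add_norm_sub_oneLp_sq hGint)
    (mul_norm_sub_le_of_isGeomErg hge hdiff hI hG hmean)

end L2

section Kernel

variable {P : Kernel X X} {π μ ρ : Measure X}

lemma mIter_succ (P : Kernel X X) (n : ℕ) (μ : Measure X) :
    mIter P (n + 1) μ = (mIter P n μ).bind (fun x => P x) :=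
  Function.iterate_succ_apply' _ _ _

instance isProbabilityMeasure_mIter [IsMarkovKernel P] [IsProbabilityMeasure μ] (n : ℕ) :
    IsProbabilityMeasure (mIter P n μ) := by
  induction n with
  | zero => assumption
  | succ n ih => rw [mIter_succ]; infer_instance

lemma mIter_absolutelyContinuous (hμ : μ ≪ ρ) (hρ : ρ.bind (fun x => P x) = ρ) (n : ℕ) :
    mIter P n μ ≪ ρ := by
  induction n with
  | zero => exact hμ
  | succ n ih => rw [mIter_succ, ← hρ]; exact ih.comp_right P

variable {T : Lp ℝ 2 π →L[ℝ] Lp ℝ 2 π}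

lemma ActsOn.memLp_rnd_bind (hT : ActsOn π P T) [IsProbabilityMeasure μ] (hμ : μ ≪ π)
    (hm : MemLp (rnd π μ) 2 π) : MemLp (rnd π (μ.bind (fun x => P x))) 2 π :=
  (Lp.memLp _).ae_eq (hT μ ‹_› hμ hm)

lemma ActsOn.toLp_rnd_bind (hT : ActsOn π P T) [IsProbabilityMeasure μ] (hμ : μ ≪ π)
    (hm : MemLp (rnd π μ) 2 π) (hm' : MemLp (rnd π (μ.bind (fun x => P x))) 2 π) :
    hm'.toLp (rnd π (μ.bind (fun x => P x))) = T (hm.toLp (rnd π μ)) :=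
  Lp.ext (hm'.coeFn_toLp.trans (hT μ ‹_› hμ hm).symm)

lemma ActsOn.apply_toLp_rnd_of_bind_eq (hT : ActsOn π P T) [IsProbabilityMeasure ρ]
    (hρ : ρ ≪ π) (hm : MemLp (rnd π ρ) 2 π) (hstat : ρ.bind (fun x => P x) = ρ) :
    T (hm.toLp (rnd π ρ)) = hm.toLp (rnd π ρ) := by
  have h := hT.toLp_rnd_bind hρ hm (by rwa [hstat])
  simp_rw [hstat] at h
  exact h.symm

lemma ActsOn.memLp_rnd_mIter (hT : ActsOn π P T) [IsMarkovKernel P] [IsProbabilityMeasure μ]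
    (hμ : ∀ n, mIter P n μ ≪ π) (hm : MemLp (rnd π μ) 2 π) (n : ℕ) :
    MemLp (rnd π (mIter P n μ)) 2 π := by
  induction n with
  | zero => exact hm
  | succ n ih => rw [mIter_succ]; exact hT.memLp_rnd_bind (hμ n) ih

lemma ActsOn.norm_toLp_rnd_mIter_sub_le [IsFiniteMeasure π] (hT : ActsOn π P T)
    [IsMarkovKernel P] {β : ℝ} (hge : IsGeomErg π T β) (hβ : β ≤ 1) {G : Lp ℝ 2 π}
    (hG : T G = G) (hGint : ∫ x, G x ∂π = 1) [IsProbabilityMeasure μ]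
    (hμ : ∀ n, mIter P n μ ≪ π) (hm : MemLp (rnd π μ) 2 π) (n : ℕ)
    (hmn : MemLp (rnd π (mIter P n μ)) 2 π) :
    ‖hmn.toLp (rnd π (mIter P n μ)) - G‖ ≤ (1 - β) ^ n * ‖hm.toLp (rnd π μ) - G‖ := by
  induction n with
  | zero => rw [pow_zero, one_mul]; rfl
  | succ n ih =>
    have hmk := hT.memLp_rnd_mIter hμ hm n
    have hmean : ∫ x, (hmk.toLp _ - G) x ∂π = 0 :=
      Lp.integral_sub_eq_zero_of_integral_eq ((integral_toLp_rnd (hμ n) hmk).trans hGint.symm)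
    simp_rw [mIter_succ] at hmn ⊢
    calc ‖hmn.toLp _ - G‖ = ‖T (hmk.toLp _ - G)‖ := by
          rw [hT.toLp_rnd_bind (hμ n) hmk, map_sub, hG]
      _ ≤ (1 - β) * ‖hmk.toLp _ - G‖ := hge _ hmean
      _ ≤ (1 - β) * ((1 - β) ^ n * ‖hm.toLp (rnd π μ) - G‖) :=
          mul_le_mul_of_nonneg_left (ih hmk) (by linarith)
      _ = (1 - β) ^ (n + 1) * ‖hm.toLp (rnd π μ) - G‖ := by ring

end Kernel

theorem stmt8_general (π : Measure X) [IsProbabilityMeasure π] (P Pe : Kernel X X)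
    [IsMarkovKernel P] [IsMarkovKernel Pe]
    (hstat : π.bind (fun x => P x) = π)
    (α ε : ℝ) (hα1 : α < 1) (hε0 : 0 < ε) (hεα : ε < α)
    (T Te : Lp ℝ 2 π →L[ℝ] Lp ℝ 2 π) (hT : ActsOn π P T) (hTe : ActsOn π Pe Te)
    (hge : IsGeomErg π T α) (hdiff : ‖T - Te‖ ≤ ε)
    (πe : Measure X) [IsProbabilityMeasure πe] (hstate : πe.bind (fun x => Pe x) = πe)
    (hac1 : πe ≪ π) (hac2 : π ≪ πe) (hπe : MemLp (rnd π πe) 2 π) :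
    (∀ μ : Measure X, IsProbabilityMeasure μ → μ ≪ π → MemLp (rnd π μ) 2 π →
      ∀ n : ℕ, d2 π (mIter Pe n μ) π
        ≤ (1 - (α - ε)) ^ n * d2 π μ πe + ε / Real.sqrt (α ^ 2 - ε ^ 2)) ∧
    (∀ ν : Measure X, IsProbabilityMeasure ν → ν ≪ πe →
      ∀ M : ℝ, (∀ᵐ x ∂πe, rnd πe ν x ≤ M) →
        ∃ C : ℝ, ∀ n : ℕ, d1 π (mIter Pe n ν) π
          ≤ C * (1 - (α - ε)) ^ n + ε / Real.sqrt (α ^ 2 - ε ^ 2)) := by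
  set G := hπe.toLp (rnd π πe)
  have hGint : ∫ x, G x ∂π = 1 := integral_toLp_rnd hac1 hπe
  have hfixe : Te G = G := hTe.apply_toLp_rnd_of_bind_eq hac1 hπe hstate
  have hfix : T (oneLp π) = oneLp π :=
    hT.apply_toLp_rnd_of_bind_eq Measure.AbsolutelyContinuous.rfl memLp_rnd_self hstat
  have hbias : ‖G - oneLp π‖ ≤ ε / √(α ^ 2 - ε ^ 2) :=
    norm_sub_oneLp_le_of_isGeomErg hge hdiff hε0.le hεα hfix hfixe hGint
  have hiter : ∀ μ : Measure X, IsProbabilityMeasure μ → μ ≪ π → ∀ n, mIter Pe n μ ≪ π :=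
    fun μ _ hμ n => (mIter_absolutelyContinuous (hμ.trans hac2) hstate n).trans hac1
  have hL2 : ∀ μ : Measure X, IsProbabilityMeasure μ → μ ≪ π → MemLp (rnd π μ) 2 π →
      ∀ n : ℕ, d2 π (mIter Pe n μ) π
        ≤ (1 - (α - ε)) ^ n * d2 π μ πe + ε / √(α ^ 2 - ε ^ 2) := by
    intro μ _ hμ hm n
    have hmn := hTe.memLp_rnd_mIter (hiter μ ‹_› hμ) hm n
    rw [d2_eq_norm_toLp_sub hmn memLp_rnd_self, d2_eq_norm_toLp_sub hm hπe]
    exact (norm_sub_le_norm_sub_add_norm_sub _ G _).trans <| add_le_add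
      (hTe.norm_toLp_rnd_mIter_sub_le (hge.of_norm_sub_le hdiff) (by linarith) hfixe hGint
        (hiter μ ‹_› hμ) hm n hmn) hbias
  refine ⟨hL2, fun ν _ hν M hM => ⟨d2 π ν πe, fun n => ?_⟩⟩
  have hνπ := hν.trans hac1
  have hm := memLp_rnd_of_rnd_le hν hac2 hπe hM
  rw [mul_comm]
  exact (d1_le_d2 (hTe.memLp_rnd_mIter (hiter ν ‹_› hνπ) hm n) memLp_rnd_self).trans
    (hL2 ν ‹_› hνπ hm n)

/-- Finite-time error bounds towards `π` for the perturbed chain, in `L²(π)` and in `L¹`. -/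
theorem stmt8 (π : Measure X) [IsProbabilityMeasure π] (P Pe : Kernel X X)
    [IsMarkovKernel P] [IsMarkovKernel Pe]
    (hstat : π.bind (fun x => P x) = π)
    (α ε : ℝ) (hα0 : 0 < α) (hα1 : α < 1) (hε0 : 0 < ε) (hεα : ε < α)
    (T Te : Lp ℝ 2 π →L[ℝ] Lp ℝ 2 π) (hT : ActsOn π P T) (hTe : ActsOn π Pe Te)
    (hge : IsGeomErg π T α) (hdiff : ‖T - Te‖ ≤ ε)
    (πe : Measure X) [IsProbabilityMeasure πe] (hstate : πe.bind (fun x => Pe x) = πe)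
    (hac1 : πe ≪ π) (hac2 : π ≪ πe) (hπe : MemLp (rnd π πe) 2 π) :
    (∀ μ : Measure X, IsProbabilityMeasure μ → μ ≪ π → MemLp (rnd π μ) 2 π →
      ∀ n : ℕ, d2 π (mIter Pe n μ) π
        ≤ (1 - (α - ε)) ^ n * d2 π μ πe + ε / Real.sqrt (α ^ 2 - ε ^ 2)) ∧
    (∀ ν : Measure X, IsProbabilityMeasure ν → ν ≪ πe →
      ∀ M : ℝ, (∀ᵐ x ∂πe, rnd πe ν x ≤ M) →
        ∃ C : ℝ, ∀ n : ℕ, d1 π (mIter Pe n ν) π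
          ≤ C * (1 - (α - ε)) ^ n + ε / Real.sqrt (α ^ 2 - ε ^ 2)) :=
  stmt8_general π P Pe hstat α ε hα1 hε0 hεα T Te hT hTe hge hdiff πe hstate hac1 hac2 hπe
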